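/- arXiv:2603.04345 — 2 statements merged into one kernel-verified Lean document; each statement's English description precedes it below -/
import Mathlib

section
/- A rule satisfies upstream invariance, equal treatment of equal single polluters, top consistency and additivity if and only if it is the full-transfer rule φ^FT. -/
open Finset

/-!  River pollution claims problems (Yang et al. / Martínez & Moreno-Ternero).

Agents are `Fin n`, ordered upstream (agent `0`) to downstream (agent `n-1`).  -/

/-- A rule candidate: for each population size `n` it maps a claims vector and a
budget to a vector of awards. -/
abbrev RuleFun : Type := (n : ℕ) → (Fin n → ℝ) → ℝ → (Fin n → ℝ)

/-- `(c, E)` is a river pollution (abatement) problem: claims are nonnegative, the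
aggregate claim `C = ∑ i, c i` is positive, and `0 ≤ E ≤ C`. -/
def IsProblem {n : ℕ} (c : Fin n → ℝ) (E : ℝ) : Prop :=
  (∀ i, 0 ≤ c i) ∧ 0 < ∑ i, c i ∧ 0 ≤ E ∧ E ≤ ∑ i, c i

/-- A redistribution problem: a problem whose budget equals the aggregate claim. -/
def IsRedistribution {n : ℕ} (c : Fin n → ℝ) (E : ℝ) : Prop :=
  IsProblem c E ∧ E = ∑ i, c i

/-- `φ` is a rule: on every problem it returns a nonnegative allocation exhausting
the budget. -/
def IsRule (φ : RuleFun) : Prop :=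
  ∀ (n : ℕ) (c : Fin n → ℝ) (E : ℝ), IsProblem c E →
    (∀ i, 0 ≤ φ n c E i) ∧ ∑ i, φ n c E i = E

/-- Budget additivity: if the budget comes in two installments `E = E' + E''`, the
allocation for `E` is the sum of the allocations for `E'` and `E''`. -/
def BudgetAdditive (φ : RuleFun) : Prop :=
  ∀ (n : ℕ) (c : Fin n → ℝ) (E E' E'' : ℝ), IsProblem c E →
    0 ≤ E' → 0 ≤ E'' → E = E' + E'' →
    φ n c E = fun i => φ n c E' i + φ n c E'' i

/-- Scale invariance: rescaling claims and budget by `μ > 0` rescales the allocation. -/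
def ScaleInvariant (φ : RuleFun) : Prop :=
  ∀ (n : ℕ) (c : Fin n → ℝ) (E μ : ℝ), IsProblem c E → 0 < μ →
    φ n (fun i => μ * c i) (μ * E) = fun i => μ * φ n c E i

/-- Upstream invariance: in redistribution problems, increasing the claim of agent `i`
does not change the awards of agents located strictly upstream of `i`. -/
def UpstreamInvariant (φ : RuleFun) : Prop :=
  ∀ (n : ℕ) (c d : Fin n → ℝ),
    IsRedistribution c (∑ i, c i) → IsRedistribution d (∑ i, d i) →
    ∀ i : Fin n, c i < d i → (∀ j, j ≠ i → c j = d j) →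
    ∀ k, k < i → φ n c (∑ i, c i) k = φ n d (∑ i, d i) k

/-- The claims vector whose only (single) polluter is agent `i`, with claim `E`. -/
def singleClaim {n : ℕ} (i : Fin n) (E : ℝ) : Fin n → ℝ :=
  fun k => if k = i then E else 0

/-- Equal treatment of equal single polluters: in the redistribution problems whose
claims vector is `E` times a standard basis vector, any two non-terminal single
polluters receive the same award. -/
def EqualTreatmentOfEqualSinglePolluters (φ : RuleFun) : Prop :=
  ∀ (n : ℕ), 2 ≤ n → ∀ E : ℝ, 0 < E → ∀ i j : Fin n,
    (i : ℕ) < n - 1 → (j : ℕ) < n - 1 →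
    φ n (singleClaim i E) E i = φ n (singleClaim j E) E j

/-- Equal treatment of equal claims: agents with equal claims receive equal awards. -/
def EqualTreatmentOfEqualClaims (φ : RuleFun) : Prop :=
  ∀ (n : ℕ) (c : Fin n → ℝ) (E : ℝ), IsProblem c E →
    ∀ i j : Fin n, c i = c j → φ n c E i = φ n c E j

/-- The reduced claims vector obtained when the most upstream agent leaves with
award `x`: the new first agent's claim is `c 1 + (c 0 - x)`, and the remaining
claims are unchanged. -/
def reducedClaims {n : ℕ} (c : Fin (n + 1) → ℝ) (x : ℝ) : Fin n → ℝ :=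
  fun k => c k.succ + if (k : ℕ) = 0 then c 0 - x else 0

/-- Top consistency: in a redistribution problem, if the most upstream agent leaves
with its award (not exceeding its claim), transferring its residual claim to its
successor, and the reduced pair is again a problem (hence a redistribution problem),
then the awards of the remaining agents are unchanged. -/
def TopConsistent (φ : RuleFun) : Prop :=
  ∀ (n : ℕ) (c : Fin (n + 2) → ℝ) (E : ℝ), IsRedistribution c E →
    φ (n + 2) c E 0 ≤ c 0 →
    IsProblem (reducedClaims c (φ (n + 2) c E 0)) (E - φ (n + 2) c E 0) →
    ∀ k : Fin (n + 1),
      φ (n + 2) c E k.succ =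
        φ (n + 1) (reducedClaims c (φ (n + 2) c E 0)) (E - φ (n + 2) c E 0) k

/-- (Full) additivity: the allocation is additive in claims-budget pairs. -/
def AdditiveRule (φ : RuleFun) : Prop :=
  ∀ (n : ℕ) (c d : Fin n → ℝ) (E E' : ℝ),
    IsProblem c E → IsProblem d E' → IsProblem (fun i => c i + d i) (E + E') →
    φ n (fun i => c i + d i) (E + E') = fun i => φ n c E i + φ n d E' i

/-- The elementary redistribution problem `u_n`: only the most upstream agent has a
(positive, unitary) claim; the budget is `1`. -/
def unitClaims (n : ℕ) : Fin n → ℝ := fun k => if (k : ℕ) = 0 then 1 else 0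

/-- Merging/splitting proofness: in the elementary problems `u_n`, merging two
adjacent agents `i, i+1` into a single agent (yielding `u_{n-1}`) does not change
their total award. -/
def MergingSplittingProof (φ : RuleFun) : Prop :=
  ∀ (m : ℕ) (i : Fin (m + 1)),
    φ (m + 2) (unitClaims (m + 2)) 1 i.castSucc
      + φ (m + 2) (unitClaims (m + 2)) 1 i.succ
      = φ (m + 1) (unitClaims (m + 1)) 1 i

/-- The proportional rule `φ^P`. -/
noncomputable def propAlloc : RuleFun :=
  fun _ c E i => c i * (E / ∑ j, c j)

/-- The full transfer rule `φ^FT`: the most downstream agent gets the whole budget. -/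
def ftAlloc : RuleFun :=
  fun n => fun _ E i => if (i : ℕ) = n - 1 then E else 0

/-- The averaging (externality-adjusted proportional) rule `φ^λ`. -/
noncomputable def avgAlloc (lam : ℝ) : RuleFun :=
  fun n c E i => lam * propAlloc n c E i + (1 - lam) * ftAlloc n c E i

/-- The (geometrically) augmented claim of agent `i` under parameter `γ`:
`c i + ∑_{k<i} (1-γ)^(i-k) * c k`. -/
noncomputable def geomShare (γ : ℝ) {n : ℕ} (c : Fin n → ℝ) (i : Fin n) : ℝ :=
  c i + ∑ k ∈ Finset.Iio i, (1 - γ) ^ ((i : ℕ) - (k : ℕ)) * c k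

/-- The geometric rule `φ^γ`: every non-terminal agent gets the fraction `γ` of its
augmented proportional share; the most downstream agent gets its full augmented
proportional share. -/
noncomputable def geomAlloc (γ : ℝ) : RuleFun :=
  fun n c E i =>
    (if (i : ℕ) = n - 1 then 1 else γ) * geomShare γ c i * (E / ∑ j, c j)

/-- A transfer function `Γ : ℝ₊ → ℝ₊` with `0 ≤ Γ(t) ≤ t`. -/
def IsTransferFunction (Γ : ℝ → ℝ) : Prop := ∀ t : ℝ, 0 ≤ t → 0 ≤ Γ t ∧ Γ t ≤ t

/-- `rGammaNat Γ c i = Γ (c i + ∑_{k<i} (c k - rGammaNat Γ c k))`: the recursively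
defined generalized geometric shares (of all non-terminal agents). -/
noncomputable def rGammaNat (Γ : ℝ → ℝ) (c : ℕ → ℝ) : ℕ → ℝ
  | i => Γ (c i + ∑ k : Fin i, (c k - rGammaNat Γ c k))
decreasing_by exact k.isLt

/-- Extension of a claims vector on `Fin n` to `ℕ` (by `0`). -/
def extendClaims {n : ℕ} (c : Fin n → ℝ) : ℕ → ℝ :=
  fun k => if h : k < n then c ⟨k, h⟩ else 0

/-- The shares `r^Γ_i(c)` of the generalized geometric rule: non-terminal agents get
`Γ(c i + ∑_{k<i}(c k − r_k))`, the most downstream agent gets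
`c i + ∑_{k<i}(c k − r_k)`. -/
noncomputable def genGeomShare (Γ : ℝ → ℝ) {n : ℕ} (c : Fin n → ℝ) (i : Fin n) : ℝ :=
  if (i : ℕ) = n - 1 then
    c i + ∑ k : Fin (i : ℕ), (extendClaims c k - rGammaNat Γ (extendClaims c) k)
  else rGammaNat Γ (extendClaims c) i

/-- The generalized geometric rule `φ^Γ`. -/
noncomputable def genGeomAlloc (Γ : ℝ → ℝ) : RuleFun :=
  fun _ c E i => genGeomShare Γ c i * (E / ∑ j, c j)

lemma sC_sum {n : ℕ} (i : Fin n) (E : ℝ) : ∑ k, singleClaim i E k = E := by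
  simp [singleClaim]
lemma sC_prob {n : ℕ} (i : Fin n) {E B : ℝ} (hE : 0 < E) (h0 : 0 ≤ B) (h1 : B ≤ E) :
    IsProblem (singleClaim i E) B := by
  refine ⟨fun k => ?_, ?_, h0, ?_⟩
  · unfold singleClaim; split
    · exact hE.le
    · exact le_refl 0
  · rw [sC_sum]; exact hE
  · rw [sC_sum]; exact h1

lemma zero_budget {φ : RuleFun} (hφ : IsRule φ) {n : ℕ} {c : Fin n → ℝ}
    (h : IsProblem c 0) (i : Fin n) : φ n c 0 i = 0 := by
  obtain ⟨hnn, hs⟩ := hφ n c 0 h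
  have := (Finset.sum_eq_zero_iff_of_nonneg (fun j _ => hnn j)).1 hs
  exact this i (mem_univ i)

/-- doubling: award at `k < i` in single-polluter redistribution is 0. -/
lemma single_upstream_zero {φ : RuleFun} (hφ : IsRule φ) (hUI : UpstreamInvariant φ)
    (hAdd : AdditiveRule φ) {n : ℕ} (i : Fin n) {E : ℝ} (hE : 0 < E)
    (k : Fin n) (hk : k < i) : φ n (singleClaim i E) E k = 0 := by
  have h2E : (0:ℝ) < 2 * E := by linarith
  have hcomb : (fun j => singleClaim i E j + singleClaim i E j) = singleClaim i (2*E) := by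
    funext j; unfold singleClaim; split <;> ring
  have hadd := hAdd n (singleClaim i E) (singleClaim i E) E E
    (sC_prob i hE hE.le le_rfl) (sC_prob i hE hE.le le_rfl)
    (by rw [hcomb, show E + E = 2*E by ring]; exact sC_prob i h2E (by linarith) le_rfl)
  rw [hcomb, show E + E = 2*E by ring] at hadd
  -- upstream invariance between singleClaim i E and singleClaim i (2E)
  have hred1 : IsRedistribution (singleClaim i E) (∑ j, singleClaim i E j) :=
    ⟨by rw [sC_sum]; exact sC_prob i hE hE.le le_rfl, rfl⟩
  have hred2 : IsRedistribution (singleClaim i (2*E)) (∑ j, singleClaim i (2*E) j) :=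
    ⟨by rw [sC_sum]; exact sC_prob i h2E h2E.le le_rfl, rfl⟩
  have hui := hUI n (singleClaim i E) (singleClaim i (2*E)) hred1 hred2 i
    (by unfold singleClaim; simp; linarith)
    (by intro j hj; unfold singleClaim; simp [hj]) k hk
  rw [sC_sum, sC_sum] at hui
  have := congrFun hadd k
  rw [← hui] at this
  linarith

lemma single_zero {φ : RuleFun} (hφ : IsRule φ) (hUI : UpstreamInvariant φ)
    (hAdd : AdditiveRule φ) {m : ℕ} (i : Fin (m+2)) {E : ℝ} (hE : 0 < E) :
    φ (m+2) (singleClaim i E) E 0 = 0 := by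
  by_cases hi : i = 0
  · subst hi
    set t : Fin (m+2) := ⟨m+1, by omega⟩ with ht
    have htne : (0 : Fin (m+2)) < t := by
      rw [Fin.lt_def]; simp [ht]
    have p1 : IsProblem (singleClaim (0 : Fin (m+2)) E) E := sC_prob _ hE hE.le le_rfl
    have p2 : IsProblem (singleClaim t E) (0:ℝ) := sC_prob _ hE le_rfl hE.le
    have p2' : IsProblem (singleClaim t E) E := sC_prob _ hE hE.le le_rfl
    have p1' : IsProblem (singleClaim (0 : Fin (m+2)) E) (0:ℝ) := sC_prob _ hE le_rfl hE.le
    have hsum2 : ∑ j, (singleClaim (0 : Fin (m+2)) E j + singleClaim t E j) = 2*E := by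
      rw [Finset.sum_add_distrib, sC_sum, sC_sum]; ring
    have p3 : IsProblem (fun j => singleClaim (0 : Fin (m+2)) E j + singleClaim t E j) (E + 0) := by
      refine ⟨fun j => add_nonneg (p1.1 j) (p2'.1 j), ?_, by linarith, ?_⟩
      · rw [hsum2]; linarith
      · rw [hsum2]; linarith
    have p3' : IsProblem (fun j => singleClaim t E j + singleClaim (0 : Fin (m+2)) E j) (E + 0) := by
      refine ⟨fun j => add_nonneg (p2'.1 j) (p1.1 j), ?_, by linarith, ?_⟩ <;>
        · rw [show ∑ j, (singleClaim t E j + singleClaim (0 : Fin (m+2)) E j) = 2*E by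
            rw [Finset.sum_add_distrib, sC_sum, sC_sum]; ring]
          linarith
    have h1 := hAdd (m+2) (singleClaim (0 : Fin (m+2)) E) (singleClaim t E) E 0 p1 p2 p3
    have h2 := hAdd (m+2) (singleClaim t E) (singleClaim (0 : Fin (m+2)) E) E 0 p2' p1' p3'
    have hfe : (fun j => singleClaim t E j + singleClaim (0 : Fin (m+2)) E j)
        = fun j => singleClaim (0 : Fin (m+2)) E j + singleClaim t E j := by
      funext j; ring
    rw [hfe] at h2
    have e1 := congrFun h1 0
    have e2 := congrFun h2 0
    have z1 : φ (m+2) (singleClaim t E) 0 0 = 0 := zero_budget hφ p2 0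
    have z2 : φ (m+2) (singleClaim (0 : Fin (m+2)) E) 0 0 = 0 := zero_budget hφ p1' 0
    have z3 : φ (m+2) (singleClaim t E) E 0 = 0 :=
      single_upstream_zero hφ hUI hAdd t hE 0 htne
    rw [e2, z1, z2, z3] at e1
    linarith
  · exact single_upstream_zero hφ hUI hAdd i hE 0 (Fin.pos_of_ne_zero hi)

lemma restricted_zero {φ : RuleFun} (hφ : IsRule φ) (hUI : UpstreamInvariant φ)
    (hAdd : AdditiveRule φ) {m : ℕ} (c : Fin (m+2) → ℝ) :
    ∀ s : Finset (Fin (m+2)), s.Nonempty → (∀ i ∈ s, 0 < c i) →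
      φ (m+2) (fun j => if j ∈ s then c j else 0) (∑ i ∈ s, c i) 0 = 0 := by
  intro s hs
  induction hs using Finset.Nonempty.cons_induction with
  | singleton a =>
    intro hpos
    have hc : (fun j => if j ∈ ({a} : Finset (Fin (m+2))) then c j else 0)
        = singleClaim a (c a) := by
      funext j
      simp only [Finset.mem_singleton, singleClaim]
      by_cases h : j = a <;> simp [h]
    rw [hc, Finset.sum_singleton]
    exact single_zero hφ hUI hAdd a (hpos a (Finset.mem_singleton_self a))
  | cons a s ha hne ih =>
    intro hpos
    have hpa : 0 < c a := hpos a (Finset.mem_cons_self a s)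
    have hps : ∀ i ∈ s, 0 < c i := fun i hi => hpos i (Finset.mem_cons_of_mem hi)
    have hsum_s_pos : 0 < ∑ i ∈ s, c i := Finset.sum_pos hps hne
    have hrsum : ∑ j, (fun j => if j ∈ s then c j else 0) j = ∑ i ∈ s, c i := by
      simp only []
      rw [← Finset.sum_filter]
      congr 1
      exact Finset.filter_mem_eq_inter.trans (by simp)
    have pr : IsProblem (fun j => if j ∈ s then c j else 0) (∑ i ∈ s, c i) := by
      refine ⟨fun j => ?_, ?_, hsum_s_pos.le, ?_⟩
      · dsimp only; split
        · exact (hps _ (by assumption)).le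
        · exact le_rfl
      · rw [hrsum]; exact hsum_s_pos
      · rw [hrsum]
    have pa : IsProblem (singleClaim a (c a)) (c a) := sC_prob _ hpa hpa.le le_rfl
    have hcomb : (fun j => singleClaim a (c a) j + (if j ∈ s then c j else 0))
        = fun j => if j ∈ Finset.cons a s ha then c j else 0 := by
      funext j
      simp only [singleClaim, Finset.mem_cons]
      by_cases h : j = a
      · subst h; simp [ha]
      · by_cases h2 : j ∈ s <;> simp [h, h2]
    have pcomb : IsProblem (fun j => singleClaim a (c a) j + (if j ∈ s then c j else 0))
        (c a + ∑ i ∈ s, c i) := by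
      have hsc : ∑ j, (singleClaim a (c a) j + (if j ∈ s then c j else 0))
          = c a + ∑ i ∈ s, c i := by
        rw [Finset.sum_add_distrib, sC_sum, hrsum]
      refine ⟨fun j => add_nonneg (pa.1 j) (pr.1 j), ?_, by positivity, ?_⟩
      · rw [hsc]; positivity
      · rw [hsc]
    have hadd := hAdd (m+2) (singleClaim a (c a)) (fun j => if j ∈ s then c j else 0)
      (c a) (∑ i ∈ s, c i) pa pr pcomb
    rw [hcomb] at hadd
    have := congrFun hadd 0
    rw [Finset.sum_cons, this, ih hps,
      single_zero hφ hUI hAdd a hpa, add_zero]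

lemma top_zero {φ : RuleFun} (hφ : IsRule φ) (hUI : UpstreamInvariant φ)
    (hAdd : AdditiveRule φ) {m : ℕ} {c : Fin (m+2) → ℝ}
    (h : IsRedistribution c (∑ i, c i)) :
    φ (m+2) c (∑ i, c i) 0 = 0 := by
  obtain ⟨⟨hnn, hpos, _, _⟩, _⟩ := h
  set s : Finset (Fin (m+2)) := Finset.univ.filter (fun i => 0 < c i) with hsdef
  have hmem : ∀ j, j ∈ s ↔ 0 < c j := by intro j; simp [hsdef]
  have hne : s.Nonempty := by
    by_contra hemp
    rw [Finset.not_nonempty_iff_eq_empty] at hemp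
    have : ∑ i, c i = 0 := by
      apply Finset.sum_eq_zero
      intro i _
      have : ¬ 0 < c i := fun hp => by
        have := (hmem i).2 hp; rw [hemp] at this; exact absurd this (Finset.notMem_empty i)
      linarith [hnn i]
    linarith
  have hres := restricted_zero hφ hUI hAdd c s hne (fun i hi => (hmem i).1 hi)
  have hc : (fun j => if j ∈ s then c j else 0) = c := by
    funext j
    by_cases hj : j ∈ s
    · simp [hj]
    · have : ¬ 0 < c j := fun hp => hj ((hmem j).2 hp)
      simp [hj]; linarith [hnn j]
  have hsum : ∑ i ∈ s, c i = ∑ i, c i := by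
    apply Finset.sum_filter_of_ne
    intro x _ hx
    rcases lt_or_eq_of_le (hnn x) with h | h
    · exact h
    · exact absurd h.symm hx
  rw [hc, hsum] at hres
  exact hres




lemma redis_ft {φ : RuleFun} (hφ : IsRule φ) (hUI : UpstreamInvariant φ)
    (hTC : TopConsistent φ) (hAdd : AdditiveRule φ) :
    ∀ (n : ℕ) (c : Fin n → ℝ), IsRedistribution c (∑ i, c i) →
      φ n c (∑ i, c i) = ftAlloc n c (∑ i, c i) := by
  intro n
  induction n with
  | zero =>
    intro c h
    exact absurd h.1.2.1 (by simp)
  | succ m ih =>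
    rcases m with _ | m'
    · -- n = 1
      intro c h
      funext i
      have hi : i = 0 := Fin.fin_one_eq_zero i
      subst hi
      have hs := (hφ 1 c (∑ i, c i) h.1).2
      simp only [ftAlloc]
      rw [if_pos (by norm_num)]
      exact (Fin.sum_univ_one _).symm.trans hs
    · -- n = m' + 2
      intro c h
      have h0 : φ (m'+2) c (∑ i, c i) 0 = 0 := top_zero hφ hUI hAdd h
      -- reduced claims with x = 0
      have hrsum : ∑ k, reducedClaims c 0 k = ∑ i, c i := by
        unfold reducedClaims
        rw [Finset.sum_add_distrib]
        rw [Fin.sum_univ_succ (f := c)]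
        have : ∑ k : Fin (m'+1), (if (k:ℕ) = 0 then c 0 - 0 else 0) = c 0 := by
          rw [Fin.sum_univ_succ]
          simp
        rw [this]; ring
      have hrprob : IsProblem (reducedClaims c 0) (∑ i, c i - 0) := by
        obtain ⟨⟨hnn, hpos, _, _⟩, _⟩ := h
        refine ⟨fun k => ?_, ?_, by linarith, ?_⟩
        · unfold reducedClaims
          have := hnn k.succ
          have := hnn 0
          split <;> [linarith; linarith]
        · rw [hrsum]; linarith
        · rw [hrsum]; linarith
      have hrprob' : IsProblem (reducedClaims c (φ (m'+2) c (∑ i, c i) 0))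
          (∑ i, c i - φ (m'+2) c (∑ i, c i) 0) := by rw [h0]; exact hrprob
      have htc := hTC m' c (∑ i, c i) h (by rw [h0]; exact h.1.1 0) hrprob'
      rw [h0] at htc
      have hrprob2 : IsProblem (reducedClaims c 0) (∑ k, reducedClaims c 0 k) := by
        rw [hrsum]
        have := hrprob
        rwa [sub_zero] at this
      have hred' : IsRedistribution (reducedClaims c 0) (∑ k, reducedClaims c 0 k) :=
        ⟨hrprob2, rfl⟩
      have hih := ih (reducedClaims c 0) hred'
      funext i
      induction i using Fin.cases with
      | zero =>
        rw [h0]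
        simp only [ftAlloc]
        rw [if_neg (by simp)]
      | succ k =>
        rw [htc k]
        have : (∑ i, c i - 0) = ∑ k, reducedClaims c 0 k := by rw [hrsum]; ring
        rw [this, hih]
        simp only [ftAlloc, hrsum]
        have hk : ((k.succ : Fin (m'+2)) : ℕ) = (k : ℕ) + 1 := rfl
        rw [hk]
        split_ifs <;> first | rfl | omega

lemma general_ft {φ : RuleFun} (hφ : IsRule φ) (hUI : UpstreamInvariant φ)
    (hTC : TopConsistent φ) (hAdd : AdditiveRule φ) :
    ∀ (n : ℕ) (c : Fin n → ℝ) (E : ℝ), IsProblem c E → φ n c E = ftAlloc n c E := by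
  intro n c E hp
  obtain ⟨hnn, hpos, hE0, hEC⟩ := hp
  have hp : IsProblem c E := ⟨hnn, hpos, hE0, hEC⟩
  rcases n with _ | m
  · exact absurd hpos (by simp)
  have hpC : IsProblem c (∑ i, c i) := ⟨hnn, hpos, hpos.le, le_rfl⟩
  have hp0 : IsProblem c 0 := ⟨hnn, hpos, le_rfl, hpos.le⟩
  have hpCE : IsProblem c (∑ i, c i - E) := ⟨hnn, hpos, by linarith, by linarith⟩
  have hsum2 : ∑ i, (c i + c i) = 2 * ∑ i, c i := by rw [Finset.sum_add_distrib]; ring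
  have hpcomb1 : IsProblem (fun i => c i + c i) (E + (∑ i, c i - E)) := by
    refine ⟨fun i => add_nonneg (hnn i) (hnn i), ?_, by linarith, ?_⟩ <;>
      rw [hsum2] <;> linarith
  have hpcomb2 : IsProblem (fun i => c i + c i) (0 + ∑ i, c i) := by
    refine ⟨fun i => add_nonneg (hnn i) (hnn i), ?_, by linarith, ?_⟩ <;>
      rw [hsum2] <;> linarith
  have h1 := hAdd (m+1) c c E (∑ i, c i - E) hp hpCE hpcomb1
  have h2 := hAdd (m+1) c c 0 (∑ i, c i) hp0 hpC hpcomb2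
  have hb : E + (∑ i, c i - E) = 0 + ∑ i, c i := by ring
  rw [hb] at h1
  have key : ∀ i, φ (m+1) c E i + φ (m+1) c (∑ i, c i - E) i
      = φ (m+1) c 0 i + φ (m+1) c (∑ i, c i) i := fun i => by
    have := (congrFun h1 i).symm.trans (congrFun h2 i)
    exact this
  have hft := redis_ft hφ hUI hTC hAdd (m+1) c ⟨hpC, rfl⟩
  -- awards of non-terminal agents are zero
  have hz : ∀ i : Fin (m+1), (i : ℕ) ≠ m → φ (m+1) c E i = 0 := by
    intro i hi
    have k := key i
    rw [zero_budget hφ hp0 i, hft] at k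
    simp only [ftAlloc] at k
    rw [if_neg (by omega)] at k
    have n1 := (hφ (m+1) c E hp).1 i
    have n2 := (hφ (m+1) c (∑ i, c i - E) hpCE).1 i
    linarith
  -- terminal agent gets E
  set L : Fin (m+1) := ⟨m, by omega⟩ with hL
  have hsE := (hφ (m+1) c E hp).2
  rw [Finset.sum_eq_single_of_mem L (Finset.mem_univ L)
    (fun b _ hb => hz b (fun hbm => hb (Fin.ext (by simp [hL, hbm]))))] at hsE
  funext i
  by_cases hi : (i : ℕ) = m
  · have : i = L := Fin.ext (by simp [hL, hi])
    rw [this, hsE]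
    simp only [ftAlloc, hL]
    rw [if_pos (by simp)]
  · rw [hz i hi]
    simp only [ftAlloc]
    rw [if_neg (by omega)]



/-- Theorem 4: a rule satisfies upstream invariance, equal treatment of
equal single polluters, top consistency and additivity iff it is the full-transfer rule. -/
theorem full_transfer_characterization (φ : RuleFun) (hφ : IsRule φ) :
    (UpstreamInvariant φ ∧ EqualTreatmentOfEqualSinglePolluters φ ∧
        TopConsistent φ ∧ AdditiveRule φ) ↔
      ∀ (n : ℕ) (c : Fin n → ℝ) (E : ℝ), IsProblem c E → φ n c E = ftAlloc n c E := by
  constructor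
  · rintro ⟨hUI, -, hTC, hAdd⟩
    exact general_ft hφ hUI hTC hAdd
  · intro H
    refine ⟨?_, ?_, ?_, ?_⟩
    · -- upstream invariance
      intro n c d hc hd i hlt hagree k hk
      rw [H n c _ hc.1, H n d _ hd.1]
      simp only [ftAlloc]
      have hi := i.isLt
      rw [if_neg (by omega), if_neg (by omega)]
    · -- equal treatment
      intro n hn E hE i j hi hj
      rw [H n (singleClaim i E) E (sC_prob i hE hE.le le_rfl),
        H n (singleClaim j E) E (sC_prob j hE hE.le le_rfl)]
      simp only [ftAlloc]
      rw [if_neg (by omega), if_neg (by omega)]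
    · -- top consistency
      intro n c E hred hle hprob k
      have hft := H (n+2) c E hred.1
      have h0 : φ (n+2) c E 0 = 0 := by
        rw [hft]; simp [ftAlloc]
      rw [h0] at hprob ⊢
      rw [hft, H (n+1) _ _ hprob]
      simp only [ftAlloc]
      have hk : ((k.succ : Fin (n+2)) : ℕ) = (k : ℕ) + 1 := rfl
      rw [hk]
      split_ifs <;> first | rfl | omega | simp
    · -- additivity
      intro n c d E E' hc hd hcd
      rw [H n c E hc, H n d E' hd, H n _ _ hcd]
      funext i
      simp only [ftAlloc]
      split_ifs <;> simp
end

section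
/- If a generalized geometric rule φ^Γ satisfies additivity, then Γ(t) = 0 for every t ≥ 0, and hence φ^Γ is the full-transfer rule. (In particular, since φ^Γ_1((t,0,…,0), t/2) = Γ(t)/2, φ^Γ_1((0,1,0,…,0), 1) = 0, and φ^Γ_1((t,1,0,…,0), (t+2)/2) = Γ(t)(t+2)/(2(t+1)), additivity forces Γ(t)/2 = Γ(t)(t+2)/(2(t+1)).) -/
open Finset

lemma rGammaNat_eq' (Γ : ℝ → ℝ) (c : ℕ → ℝ) (i : ℕ) :
    rGammaNat Γ c i = Γ (c i + ∑ k : Fin i, (c k - rGammaNat Γ c k)) := by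
  rw [rGammaNat]

lemma rGammaNat_zero_of (Γ : ℝ → ℝ) (hΓ0 : ∀ t : ℝ, 0 ≤ t → Γ t = 0)
    (c : ℕ → ℝ) (hc : ∀ k, 0 ≤ c k) : ∀ i, rGammaNat Γ c i = 0 := by
  intro i
  induction i using Nat.strong_induction_on with
  | _ i ih =>
    rw [rGammaNat_eq']
    apply hΓ0
    have hs : ∑ k : Fin i, (c k - rGammaNat Γ c k) = ∑ k : Fin i, c (k : ℕ) :=
      Finset.sum_congr rfl (fun k _ => by rw [ih k k.isLt]; ring)
    rw [hs]
    have : 0 ≤ ∑ k : Fin i, c (k : ℕ) :=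
      Finset.sum_nonneg (fun k _ => hc k)
    have := hc i
    linarith

lemma genGeomShare_zero_two (Γ : ℝ → ℝ) (c : Fin 2 → ℝ) :
    genGeomShare Γ c 0 = Γ (c 0) := by
  have h0 : ((0 : Fin 2) : ℕ) = 0 := rfl
  simp only [genGeomShare, h0]
  norm_num
  rw [rGammaNat_eq']
  simp [extendClaims]

/-- if a generalized geometric rule `φ^Γ` is additive, then `Γ(t) = 0`
for every `t ≥ 0`, and hence `φ^Γ` is the full-transfer rule. -/
theorem additive_genGeom_is_fullTransfer (Γ : ℝ → ℝ) (hΓ : IsTransferFunction Γ)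
    (hadd : AdditiveRule (genGeomAlloc Γ)) :
    (∀ t : ℝ, 0 ≤ t → Γ t = 0) ∧
      ∀ (n : ℕ) (c : Fin n → ℝ) (E : ℝ), IsProblem c E →
        genGeomAlloc Γ n c E = ftAlloc n c E := by
  have hG00 : Γ 0 = 0 := le_antisymm (hΓ 0 le_rfl).2 (hΓ 0 le_rfl).1
  have hG0 : ∀ t : ℝ, 0 ≤ t → Γ t = 0 := by
    intro t ht0
    rcases eq_or_lt_of_le ht0 with h | ht
    · rw [← h, hG00]
    · set c : Fin 2 → ℝ := ![t, 0] with hc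
      set d : Fin 2 → ℝ := ![0, 1] with hd
      have hsc : ∑ i, c i = t := by simp [hc, Fin.sum_univ_two]
      have hsd : ∑ i, d i = 1 := by simp [hd, Fin.sum_univ_two]
      have hscd : ∑ i, (c i + d i) = t + 1 := by
        simp [hc, hd, Fin.sum_univ_two]
      have hPc : IsProblem c (t / 2) := by
        refine ⟨?_, by rw [hsc]; exact ht, by linarith, by rw [hsc]; linarith⟩
        intro i; fin_cases i <;> simp [hc] <;> linarith
      have hPd : IsProblem d 1 := by
        refine ⟨?_, by rw [hsd]; norm_num, by norm_num, by rw [hsd]⟩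
        intro i; fin_cases i <;> simp [hd]
      have hPcd : IsProblem (fun i => c i + d i) (t / 2 + 1) := by
        refine ⟨?_, by rw [hscd]; linarith, by linarith, by rw [hscd]; linarith⟩
        intro i; fin_cases i <;> simp [hc, hd] <;> linarith
      have key := congrFun (hadd 2 c d (t / 2) 1 hPc hPd hPcd) 0
      simp only [genGeomAlloc] at key
      rw [hsc, hsd, hscd, genGeomShare_zero_two, genGeomShare_zero_two,
        genGeomShare_zero_two] at key
      have hc0 : c 0 = t := by simp [hc]
      have hd0 : d 0 = 0 := by simp [hd]
      rw [hc0, hd0, hG00] at key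
      -- key : Γ (t + 0) * ((t/2 + 1) / (t + 1)) = Γ t * ((t/2)/t) + 0 * (1/1)
      rw [add_zero] at key
      have ht1 : (0:ℝ) < t + 1 := by linarith
      have hne : t ≠ 0 := ne_of_gt ht
      have hne1 : t + 1 ≠ 0 := ne_of_gt ht1
      field_simp at key
      nlinarith [key, ht, ht1]
  refine ⟨hG0, ?_⟩
  intro n c E hE
  have hext : ∀ k, 0 ≤ extendClaims c k := by
    intro k; unfold extendClaims; split
    · exact hE.1 _
    · exact le_rfl
  have hr : ∀ k, rGammaNat Γ (extendClaims c) k = 0 :=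
    rGammaNat_zero_of Γ hG0 (extendClaims c) hext
  have hCpos : (0:ℝ) < ∑ j, c j := hE.2.1
  funext i
  by_cases hi : (i : ℕ) = n - 1
  · have hn : n = (i : ℕ) + 1 := by have := i.isLt; omega
    have hsum : c i + ∑ k : Fin (i : ℕ),
        (extendClaims c k - rGammaNat Γ (extendClaims c) k) = ∑ j, c j := by
      have h1 : ∑ k : Fin (i : ℕ),
          (extendClaims c (k : ℕ) - rGammaNat Γ (extendClaims c) (k : ℕ)) =
          ∑ k ∈ Finset.range (i : ℕ), extendClaims c k := by
        rw [Fin.sum_univ_eq_sum_range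
          (fun k => extendClaims c k - rGammaNat Γ (extendClaims c) k) (i : ℕ)]
        exact Finset.sum_congr rfl (fun k _ => by rw [hr k]; ring)
      have h2 : ∑ j, c j = ∑ k ∈ Finset.range n, extendClaims c k := by
        rw [← Fin.sum_univ_eq_sum_range]
        exact Finset.sum_congr rfl (fun j _ => by
          simp [extendClaims, j.isLt])
      have h3 : extendClaims c (i : ℕ) = c i := by
        simp [extendClaims, i.isLt]
      rw [h1, h2, show Finset.range n = Finset.range ((i : ℕ) + 1) from by rw [← hn],
        Finset.sum_range_succ, h3]; ring
    simp only [genGeomAlloc, genGeomShare, ftAlloc, hi, if_pos rfl, if_true]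
    rw [hsum, mul_div_cancel₀ _ (ne_of_gt hCpos)]
  · simp only [genGeomAlloc, genGeomShare, ftAlloc, hi, if_false, if_neg hi]
    rw [hr]; ring
end
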